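/- arXiv:2006.12408 — 6 statements merged into one kernel-verified Lean document; each statement's English description precedes it below -/
import Mathlib

section
/- With the minimal and maximal extensions M̲₁ and M̄₁ defined as above, both are monotone under free maps: for any ρ ∈ 𝔯(A) and any free map ℰ ∈ 𝔣(A→B), M̲₁(ℰ(ρ)) ≤ M̲₁(ρ) and M̄₁(ℰ(ρ)) ≤ M̄₁(ρ). -/
open scoped ENNReal

/-- The minimal extension of an `𝔯₁`-resource measure:
`M̲₁(ρ) = sup { M₁(ℰ(ρ)) : ℰ free, ℰ(ρ) ∈ 𝔯₁ }` (equal to `0` if no such `ℰ` exists). -/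
noncomputable def minimalExtension {Obj : Type*} (F : Set (Obj → Obj)) (R1 : Set Obj)
    (M1 : Obj → ℝ≥0∞) (ρ : Obj) : ℝ≥0∞ :=
  ⨆ E ∈ F, ⨆ _ : E ρ ∈ R1, M1 (E ρ)

/-- The maximal extension of an `𝔯₁`-resource measure:
`M̄₁(ρ) = inf { M₁(σ) : σ ∈ 𝔯₁, ∃ free ℰ, ℰ(σ) = ρ }` (equal to `+∞` if no such `σ` exists). -/
noncomputable def maximalExtension {Obj : Type*} (F : Set (Obj → Obj)) (R1 : Set Obj)
    (M1 : Obj → ℝ≥0∞) (ρ : Obj) : ℝ≥0∞ :=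
  ⨅ σ ∈ R1, ⨅ _ : ∃ E ∈ F, E σ = ρ, M1 σ

/-- **Monotonicity.** Both the minimal and the maximal extension are monotone under free maps. -/
theorem stmt1 {Obj : Type*} (F : Set (Obj → Obj)) (R1 : Set Obj) (M1 : Obj → ℝ≥0∞)
    (hid : id ∈ F)
    (hcomp : ∀ E₁ E₂, E₁ ∈ F → E₂ ∈ F → E₂ ∘ E₁ ∈ F)
    (hmono : ∀ ρ ∈ R1, ∀ E ∈ F, E ρ ∈ R1 → M1 (E ρ) ≤ M1 ρ)
    (ρ : Obj) (E : Obj → Obj) (hE : E ∈ F) :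
    minimalExtension F R1 M1 (E ρ) ≤ minimalExtension F R1 M1 ρ ∧
    maximalExtension F R1 M1 (E ρ) ≤ maximalExtension F R1 M1 ρ := by
  constructor
  · apply iSup₂_le; intro E' hE'
    apply iSup_le; intro h
    have hc := hcomp E E' hE hE'
    calc M1 (E' (E ρ)) = M1 ((E' ∘ E) ρ) := rfl
      _ ≤ ⨆ _ : (E' ∘ E) ρ ∈ R1, M1 ((E' ∘ E) ρ) := le_iSup_of_le h le_rfl
      _ ≤ minimalExtension F R1 M1 ρ := le_iSup₂_of_le (E' ∘ E) hc le_rfl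
  · apply le_iInf₂; intro σ hσ
    apply le_iInf; intro ⟨E₁, hE₁, hE₁σ⟩
    have h2 : ∃ E₂ ∈ F, E₂ σ = E ρ := ⟨E ∘ E₁, hcomp E₁ E hE₁ hE, by simp [hE₁σ]⟩
    exact iInf₂_le_of_le σ hσ (iInf_le_of_le h2 le_rfl)
end

section
/- Let M be any resource measure on all of 𝔯 (monotone under all free maps) that agrees with M₁ on 𝔯₁. Then for every ρ ∈ 𝔯(A), M̲₁(ρ) ≤ M(ρ) ≤ M̄₁(ρ), where M̲₁ and M̄₁ are the minimal and maximal extensions of M₁. -/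
open scoped ENNReal

/-- **Optimality.** Any resource measure `M` on all of `𝔯` (monotone under all free maps)
that agrees with `M₁` on `𝔯₁` is sandwiched between the minimal and maximal extensions. -/
theorem stmt2 {Obj : Type*} (F : Set (Obj → Obj)) (R1 : Set Obj) (M1 : Obj → ℝ≥0∞)
    (hid : id ∈ F)
    (hcomp : ∀ E₁ E₂, E₁ ∈ F → E₂ ∈ F → E₂ ∘ E₁ ∈ F)
    (hmono : ∀ ρ ∈ R1, ∀ E ∈ F, E ρ ∈ R1 → M1 (E ρ) ≤ M1 ρ)
    (M : Obj → ℝ≥0∞)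
    (hM : ∀ (ρ : Obj), ∀ E ∈ F, M (E ρ) ≤ M ρ)
    (hagree : ∀ σ ∈ R1, M σ = M1 σ)
    (ρ : Obj) :
    minimalExtension F R1 M1 ρ ≤ M ρ ∧ M ρ ≤ maximalExtension F R1 M1 ρ := by
  constructor
  · refine iSup₂_le fun E hE => iSup_le fun h => ?_
    rw [← hagree _ h]
    exact hM ρ E hE
  · refine le_iInf₂ fun σ hσ => le_iInf fun ⟨E, hE, hEσ⟩ => ?_
    rw [← hagree _ hσ, ← hEσ]
    exact hM σ E hE
end

section
/- Any quantum relative entropy 𝐃 evaluated on the classical pair (|0⟩⟨0|, (1−ε)|0⟩⟨0| + ε|1⟩⟨1|) equals −log₂(1−ε) for all ε ∈ [0,1). -/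
open scoped ENNReal Kronecker ComplexOrder Matrix
open Classical

/-- A density matrix: positive semidefinite with unit trace. -/
def IsDensity {n : Type} [Fintype n] (ρ : Matrix n n ℂ) : Prop :=
  ρ.PosSemidef ∧ ρ.trace = 1

/-- The extension `id_m ⊗ Φ` of a map `Φ` on matrices, acting blockwise. -/
def cpExt {a b : Type} (Φ : Matrix a a ℂ → Matrix b b ℂ) (m : Type)
    (M : Matrix (m × a) (m × a) ℂ) : Matrix (m × b) (m × b) ℂ :=
  Matrix.of fun p q => Φ (Matrix.of fun k l => M (p.1, k) (q.1, l)) p.2 q.2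

/-- A map on matrices is completely positive if every extension `id_m ⊗ Φ`
preserves positive semidefiniteness. -/
def IsCP {a b : Type} [Fintype a] [Fintype b] (Φ : Matrix a a ℂ → Matrix b b ℂ) : Prop :=
  ∀ (m : Type) [Fintype m] (M : Matrix (m × a) (m × a) ℂ),
    M.PosSemidef → (cpExt Φ m M).PosSemidef

/-- A quantum channel: a linear, completely positive, trace-preserving map. -/
def IsCPTP {a b : Type} [Fintype a] [Fintype b] (Φ : Matrix a a ℂ → Matrix b b ℂ) : Prop :=
  (∀ (c : ℂ) (A B : Matrix a a ℂ), Φ (c • A + B) = c • Φ A + Φ B) ∧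
    IsCP Φ ∧ ∀ A : Matrix a a ℂ, (Φ A).trace = A.trace

/-- The projector onto the support of a Hermitian matrix. -/
noncomputable def suppProj {n : Type} [Fintype n] [DecidableEq n]
    (ρ : Matrix n n ℂ) : Matrix n n ℂ :=
  if h : ρ.IsHermitian then
    (h.eigenvectorUnitary : Matrix n n ℂ) *
      Matrix.diagonal (fun i => if h.eigenvalues i = 0 then (0 : ℂ) else 1) *
      (h.eigenvectorUnitary : Matrix n n ℂ)ᴴ
  else 0

/-- The min relative entropy `D_min(ρ‖σ) = -log₂ Tr[Π_ρ σ]` (with value `+∞` if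
`Tr[Π_ρ σ] = 0`, i.e. if `ρ ⊥ σ`). -/
noncomputable def Dmin {n : Type} [Fintype n] [DecidableEq n]
    (ρ σ : Matrix n n ℂ) : ℝ≥0∞ :=
  if ((suppProj ρ * σ).trace.re) = 0 then ∞
  else ENNReal.ofReal (- Real.logb 2 ((suppProj ρ * σ).trace.re))

/-- The max relative entropy `D_max(ρ‖σ) = log₂ min {t : tσ ≥ ρ}` (with value `+∞`
if no such `t` exists, i.e. if `supp ρ ⊄ supp σ`). -/
noncomputable def Dmax {n : Type} [Fintype n]
    (ρ σ : Matrix n n ℂ) : ℝ≥0∞ :=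
  if ∃ t : ℝ, ((t : ℂ) • σ - ρ).PosSemidef then
    ENNReal.ofReal (Real.logb 2 (sInf {t : ℝ | ((t : ℂ) • σ - ρ).PosSemidef}))
  else ∞

/-!
With `f p = D(|0⟩⟨0| ‖ diag(p, 1 - p))`, data processing through the classical channel merging
the outcomes `(x, y) ≠ (0, 0)` of two bits and through a classical channel that re-prepares
`diag(p, 1 - p) ⊗ diag(q, 1 - q)` from `diag(pq, 1 - pq)` (and fixes `|0⟩⟨0|`), together with
additivity, gives `f (p * q) = f p + f q`. So `x ↦ f (2 ^ (-x))` is additive on `[0, ∞)`; being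
`ℝ≥0∞`-valued it is monotone, hence linear, and `f (1 / 2) = 1` fixes it to be `x ↦ x`.
-/

open Matrix

theorem MonotoneOn.apply_eq_self_of_map_add {h : ℝ → ℝ} (hmono : MonotoneOn h (Set.Ici 0))
    (hadd : ∀ x y, 0 ≤ x → 0 ≤ y → h (x + y) = h x + h y) (hone : h 1 = 1)
    {x : ℝ} (hx : 0 ≤ x) : h x = x := by
  have hnsmul : ∀ (n : ℕ) {y : ℝ}, 0 ≤ y → h (n * y) = n * h y := by
    intro n y hy
    induction n with
    | zero => simpa using hadd 0 0 le_rfl le_rfl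
    | succ n ih => rw [Nat.cast_succ, add_one_mul, hadd _ _ (by positivity) hy, ih, add_one_mul]
  have hnat : ∀ n : ℕ, h n = n := fun n => by simpa [hone] using hnsmul n zero_le_one
  have hbound : ∀ n : ℕ, n * |h x - x| ≤ 1 := by
    intro n
    have hnx : 0 ≤ n * x := by positivity
    set m := ⌊n * x⌋₊
    have hfloor : (m : ℝ) ≤ n * x := Nat.floor_le hnx
    have hceil : n * x < m + 1 := Nat.lt_floor_add_one _
    have hlow : (m : ℝ) ≤ n * h x := by
      rw [← hnsmul n hx, ← hnat m]
      exact hmono (Set.mem_Ici.2 m.cast_nonneg) hnx hfloor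
    have hup : n * h x ≤ m + 1 := by
      rw [← hnsmul n hx, ← Nat.cast_add_one, ← hnat (m + 1)]
      exact hmono hnx (Set.mem_Ici.2 (Nat.cast_nonneg _)) (by push_cast; exact hceil.le)
    rw [← abs_of_nonneg (Nat.cast_nonneg (α := ℝ) n), ← abs_mul, abs_le, mul_sub]
    constructor <;> linarith
  by_contra hne
  have hpos : 0 < |h x - x| := abs_pos.2 (sub_ne_zero.2 hne)
  obtain ⟨n, hn⟩ := exists_nat_gt (1 / |h x - x|)
  rw [div_lt_iff₀ hpos] at hn
  linarith [hbound n]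

theorem ENNReal.apply_eq_ofReal_of_map_add {g : ℝ → ℝ≥0∞}
    (hadd : ∀ x y, 0 ≤ x → 0 ≤ y → g (x + y) = g x + g y) (hone : g 1 = 1)
    {x : ℝ} (hx : 0 ≤ x) : g x = ENNReal.ofReal x := by
  have hmono : MonotoneOn g (Set.Ici 0) := fun y hy z _ hyz =>
    calc g y ≤ g y + g (z - y) := le_self_add
      _ = g z := by rw [← hadd _ _ hy (sub_nonneg.2 hyz), add_sub_cancel]
  have hnat : ∀ n : ℕ, g n = n := by
    intro n
    induction n with
    | zero =>
      have h := hadd 0 1 le_rfl zero_le_one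
      rw [zero_add, hone] at h
      rw [Nat.cast_zero, Nat.cast_zero]
      exact (ENNReal.add_left_inj ENNReal.one_ne_top).1 (by rw [← h, zero_add])
    | succ n ih => rw [Nat.cast_succ, hadd _ _ n.cast_nonneg zero_le_one, ih, hone, Nat.cast_succ]
  have hfin : ∀ y, 0 ≤ y → g y ≠ ⊤ := fun y hy =>
    ne_top_of_le_ne_top (hnat ⌈y⌉₊ ▸ ENNReal.natCast_ne_top _)
      (hmono hy (Set.mem_Ici.2 (Nat.cast_nonneg _)) (Nat.le_ceil y))
  rw [← ENNReal.ofReal_toReal (hfin x hx)]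
  congr 1
  refine MonotoneOn.apply_eq_self_of_map_add (h := fun y => (g y).toReal) ?_ ?_ (by simp [hone]) hx
  · exact fun y hy z hz hyz => ENNReal.toReal_mono (hfin z hz) (hmono hy hz hyz)
  · intro y z hy hz
    simp only [hadd y z hy hz, ENNReal.toReal_add (hfin y hy) (hfin z hz)]

theorem ENNReal.apply_eq_ofReal_neg_logb_of_map_mul {f : ℝ → ℝ≥0∞}
    (hmul : ∀ p q, 0 < p → p ≤ 1 → 0 < q → q ≤ 1 → f (p * q) = f p + f q)
    (hhalf : f (1 / 2) = 1)
    {p : ℝ} (hp0 : 0 < p) (hp1 : p ≤ 1) : f p = ENNReal.ofReal (-Real.logb 2 p) := by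
  have hrange : ∀ x : ℝ, 0 ≤ x → 0 < (2 : ℝ) ^ (-x) ∧ (2 : ℝ) ^ (-x) ≤ 1 := fun x hx =>
    ⟨by positivity, Real.rpow_le_one_of_one_le_of_nonpos one_le_two (neg_nonpos.2 hx)⟩
  have hlog := ENNReal.apply_eq_ofReal_of_map_add (g := fun x => f ((2 : ℝ) ^ (-x)))
    (fun x y hx hy => by
      simp only [neg_add, Real.rpow_add two_pos]
      exact hmul _ _ (hrange x hx).1 (hrange x hx).2 (hrange y hy).1 (hrange y hy).2)
    (by simpa [Real.rpow_neg_one] using hhalf)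
    (neg_nonneg.2 (Real.logb_nonpos (b := 2) (by norm_num) hp0.le hp1))
  simp only [neg_neg, Real.rpow_logb two_pos (by norm_num) hp0] at hlog
  exact hlog

lemma IsDensity.kronecker {a b : Type} [Fintype a] [Fintype b]
    {ρ : Matrix a a ℂ} {σ : Matrix b b ℂ} (hρ : IsDensity ρ) (hσ : IsDensity σ) :
    IsDensity (ρ ⊗ₖ σ) :=
  ⟨hρ.1.kronecker hσ.1, by rw [trace_kronecker, hρ.2, hσ.2, one_mul]⟩

section ClassicalChannel

variable {a b : Type} [DecidableEq a] [DecidableEq b]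

/-- Measure in the computational basis, then prepare outcome `j` with probability `T j i` given
outcome `i`. -/
noncomputable def classicalChannel [Fintype a] (T : Matrix b a ℝ) (M : Matrix a a ℂ) :
    Matrix b b ℂ :=
  diagonal (T.map (↑) *ᵥ M.diag)

lemma cpExt_classicalChannel [Fintype a] [Fintype b] {m : Type} [Fintype m] [DecidableEq m]
    (T : Matrix b a ℝ) (M : Matrix (m × a) (m × a) ℂ) :
    cpExt (classicalChannel T) m M =
      ∑ i, ∑ j, (T j i : ℂ) • (((1 : Matrix m m ℂ) ⊗ₖ single i j 1)ᴴ * M *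
        ((1 : Matrix m m ℂ) ⊗ₖ single i j 1)) := by
  ext ⟨p, k⟩ ⟨q, l⟩
  simp [cpExt, classicalChannel, diagonal_apply, mulVec, dotProduct, Matrix.sum_apply, mul_apply,
    kroneckerMap_apply, single_apply, one_apply, Fintype.sum_prod_type, ite_and,
    Finset.sum_ite_eq, Finset.sum_ite_eq', apply_ite (starRingEnd ℂ)]
  rcases eq_or_ne k l with rfl | h
  · simp
  · simp [h, h.symm]

lemma classicalChannel_isCPTP [Fintype a] [Fintype b] (T : Matrix b a ℝ) (hT0 : ∀ j i, 0 ≤ T j i)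
    (hT1 : ∀ i, ∑ j, T j i = 1) : IsCPTP (classicalChannel T) := by
  refine ⟨fun c A B => ?_, fun m _ M hM => ?_, fun A => ?_⟩
  · ext i j
    by_cases h : i = j <;> simp [classicalChannel, mulVec_add, mulVec_smul, h]
  · classical
    rw [cpExt_classicalChannel]
    exact posSemidef_sum _ fun i _ => posSemidef_sum _ fun j _ =>
      (hM.conjTranspose_mul_mul_same _).smul (Complex.zero_le_real.2 (hT0 j i))
  · rw [classicalChannel, trace_diagonal, trace]
    simp only [mulVec, dotProduct, map_apply, diag_apply]
    rw [Finset.sum_comm]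
    simp [← Finset.sum_mul, ← Complex.ofReal_sum, hT1]

noncomputable def classicalState (v : a → ℝ) : Matrix a a ℂ :=
  diagonal fun i => (v i : ℂ)

lemma classicalState_isDensity [Fintype a] {v : a → ℝ} (h0 : ∀ i, 0 ≤ v i)
    (h1 : ∑ i, v i = 1) : IsDensity (classicalState v) :=
  ⟨PosSemidef.diagonal fun i => Complex.zero_le_real.2 (h0 i), by
    rw [classicalState, trace_diagonal, ← Complex.ofReal_sum, h1, Complex.ofReal_one]⟩

lemma classicalState_kronecker (v : a → ℝ) (w : b → ℝ) :
    classicalState v ⊗ₖ classicalState w = classicalState fun k => v k.1 * w k.2 := by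
  simp only [classicalState, diagonal_kronecker_diagonal, Complex.ofReal_mul]

lemma classicalChannel_classicalState [Fintype a] (T : Matrix b a ℝ) (v : a → ℝ) :
    classicalChannel T (classicalState v) = classicalState (T *ᵥ v) := by
  ext j k
  simp [classicalChannel, classicalState, diagonal_apply, mulVec, dotProduct]

end ClassicalChannel

def bit (p : ℝ) : Fin 2 → ℝ := ![p, 1 - p]

lemma bit_nonneg {p : ℝ} (hp0 : 0 ≤ p) (hp1 : p ≤ 1) (x : Fin 2) : 0 ≤ bit p x := by
  fin_cases x <;> simp [bit] <;> linarith

lemma bit_isDensity {p : ℝ} (hp0 : 0 ≤ p) (hp1 : p ≤ 1) : IsDensity (classicalState (bit p)) :=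
  classicalState_isDensity (bit_nonneg hp0 hp1) (by simp [bit, Fin.sum_univ_two])

lemma classicalState_bit (p : ℝ) : classicalState (bit p) = diagonal ![(p : ℂ), 1 - p] := by
  ext i j
  fin_cases i <;> fin_cases j <;> simp [classicalState, bit]

def mergeBits : Matrix (Fin 2) (Fin 2 × Fin 2) ℝ :=
  of fun j k => if j = 0 ↔ k = (0, 0) then 1 else 0

lemma collapse_mulVec (p q : ℝ) :
    mergeBits *ᵥ (fun k => bit p k.1 * bit q k.2) = bit (p * q) := by
  ext j
  fin_cases j
  · simp [mergeBits, bit, mulVec, dotProduct]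
  · simp [mergeBits, bit, mulVec, dotProduct, Fintype.sum_prod_type]; ring

lemma collapse_isCPTP : IsCPTP (classicalChannel mergeBits) := by
  refine classicalChannel_isCPTP _ (fun j k => ?_) (fun k => ?_) <;> simp only [mergeBits, of_apply]
  · split_ifs <;> norm_num
  · rcases eq_or_ne k (0, 0) with rfl | hk <;> simp [Fin.sum_univ_two, *]

-- Re-prepares `bit p ⊗ bit q` from `bit (p * q)`: outcome `1` is resampled from the product
-- distribution conditioned on `(x, y) ≠ (0, 0)`. If `p * q = 1` that column is never used, and any
-- distribution keeps the matrix stochastic (the quotient would be junk).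
noncomputable def splitBit (p q : ℝ) : Matrix (Fin 2 × Fin 2) (Fin 2) ℝ :=
  of fun k i =>
    if i = 0 then (if k = (0, 0) then 1 else 0)
    else if p * q = 1 then (if k = (1, 1) then 1 else 0)
    else if k = (0, 0) then 0 else bit p k.1 * bit q k.2 / (1 - p * q)

lemma splitBit_mulVec_bit_one (p q : ℝ) :
    splitBit p q *ᵥ bit 1 = fun k => bit 1 k.1 * bit 1 k.2 := by
  ext ⟨x, y⟩
  fin_cases x <;> fin_cases y <;> simp [splitBit, bit, mulVec, dotProduct]

lemma splitBit_mulVec {p q : ℝ} (hp0 : 0 ≤ p) (hp1 : p ≤ 1) (hq0 : 0 ≤ q) (hq1 : q ≤ 1) :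
    splitBit p q *ᵥ bit (p * q) = fun k => bit p k.1 * bit q k.2 := by
  ext ⟨x, y⟩
  by_cases hpq : p * q = 1
  · obtain rfl : p = 1 := by nlinarith
    obtain rfl : q = 1 := by nlinarith
    fin_cases x <;> fin_cases y <;> simp [splitBit, bit, mulVec, dotProduct]
  · have : 1 - p * q ≠ 0 := sub_ne_zero.2 (Ne.symm hpq)
    fin_cases x <;> fin_cases y <;> simp [splitBit, bit, mulVec, dotProduct, hpq] <;> field_simp

lemma splitBit_isCPTP {p q : ℝ} (hp0 : 0 ≤ p) (hp1 : p ≤ 1) (hq0 : 0 ≤ q) (hq1 : q ≤ 1) :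
    IsCPTP (classicalChannel (splitBit p q)) := by
  have hpq : 0 ≤ 1 - p * q := sub_nonneg.2 (mul_le_one₀ hp1 hq0 hq1)
  refine classicalChannel_isCPTP _ (fun k i => ?_) (fun i => ?_)
  · simp only [splitBit, of_apply]
    split_ifs
    all_goals first
      | exact div_nonneg (mul_nonneg (bit_nonneg hp0 hp1 _) (bit_nonneg hq0 hq1 _)) hpq
      | norm_num
  · fin_cases i
    · simp [splitBit]
    · by_cases h : p * q = 1
      · simp [splitBit, h]
      · have : 1 - p * q ≠ 0 := sub_ne_zero.2 (Ne.symm h)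
        simp [splitBit, Fintype.sum_prod_type, Fin.sum_univ_two, h, bit]
        field_simp
        ring

theorem relEntropy_bit_mul
    (D : ∀ (m : Type) [Fintype m] [DecidableEq m], Matrix m m ℂ → Matrix m m ℂ → ℝ≥0∞)
    (hdpi : ∀ (a b : Type) [Fintype a] [DecidableEq a] [Fintype b] [DecidableEq b]
      (Φ : Matrix a a ℂ → Matrix b b ℂ), IsCPTP Φ →
      ∀ ρ σ : Matrix a a ℂ, IsDensity ρ → IsDensity σ → D b (Φ ρ) (Φ σ) ≤ D a ρ σ)
    (hadd : ∀ (a b : Type) [Fintype a] [DecidableEq a] [Fintype b] [DecidableEq b]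
      (ρ₁ σ₁ : Matrix a a ℂ) (ρ₂ σ₂ : Matrix b b ℂ),
      IsDensity ρ₁ → IsDensity σ₁ → IsDensity ρ₂ → IsDensity σ₂ →
      D (a × b) (ρ₁ ⊗ₖ ρ₂) (σ₁ ⊗ₖ σ₂) = D a ρ₁ σ₁ + D b ρ₂ σ₂)
    {p q : ℝ} (hp0 : 0 ≤ p) (hp1 : p ≤ 1) (hq0 : 0 ≤ q) (hq1 : q ≤ 1) :
    D (Fin 2) (classicalState (bit 1)) (classicalState (bit (p * q))) =
      D (Fin 2) (classicalState (bit 1)) (classicalState (bit p)) +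
        D (Fin 2) (classicalState (bit 1)) (classicalState (bit q)) := by
  have h1 := bit_isDensity zero_le_one le_rfl
  have hp := bit_isDensity hp0 hp1
  have hq := bit_isDensity hq0 hq1
  rw [← hadd _ _ _ _ _ _ h1 hp h1 hq, classicalState_kronecker, classicalState_kronecker]
  apply le_antisymm
  · have h := hdpi _ _ _ collapse_isCPTP _ _ (h1.kronecker h1) (hp.kronecker hq)
    rwa [classicalState_kronecker, classicalState_kronecker, classicalChannel_classicalState,
      classicalChannel_classicalState, collapse_mulVec, collapse_mulVec, one_mul] at h
  · have h := hdpi _ _ _ (splitBit_isCPTP hp0 hp1 hq0 hq1) _ _ h1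
      (bit_isDensity (mul_nonneg hp0 hq0) (mul_le_one₀ hp1 hq0 hq1))
    rwa [classicalChannel_classicalState, classicalChannel_classicalState, splitBit_mulVec_bit_one,
      splitBit_mulVec hp0 hp1 hq0 hq1] at h

/-- Any quantum relative entropy evaluated on the classical pair
`(|0⟩⟨0|, (1-ε)|0⟩⟨0| + ε|1⟩⟨1|)` equals `-log₂(1-ε)`. -/
theorem stmt6
    (D : ∀ (m : Type) [Fintype m] [DecidableEq m],
      Matrix m m ℂ → Matrix m m ℂ → ℝ≥0∞)
    -- data-processing inequality under quantum channels
    (hdpi : ∀ (a b : Type) [Fintype a] [DecidableEq a] [Fintype b] [DecidableEq b]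
      (Φ : Matrix a a ℂ → Matrix b b ℂ), IsCPTP Φ →
      ∀ ρ σ : Matrix a a ℂ, IsDensity ρ → IsDensity σ → D b (Φ ρ) (Φ σ) ≤ D a ρ σ)
    -- additivity under tensor products
    (hadd : ∀ (a b : Type) [Fintype a] [DecidableEq a] [Fintype b] [DecidableEq b]
      (ρ₁ σ₁ : Matrix a a ℂ) (ρ₂ σ₂ : Matrix b b ℂ),
      IsDensity ρ₁ → IsDensity σ₁ → IsDensity ρ₂ → IsDensity σ₂ →
      D (a × b) (ρ₁ ⊗ₖ ρ₂) (σ₁ ⊗ₖ σ₂) = D a ρ₁ σ₁ + D b ρ₂ σ₂)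
    -- normalization
    (hnorm : D (Fin 2) (Matrix.diagonal ![1, 0]) (Matrix.diagonal ![1/2, 1/2]) = 1)
    (ε : ℝ) (hε0 : 0 ≤ ε) (hε1 : ε < 1) :
    D (Fin 2) (Matrix.diagonal ![1, 0]) (Matrix.diagonal ![1 - (ε : ℂ), (ε : ℂ)]) =
      ENNReal.ofReal (- Real.logb 2 (1 - ε)) := by
  have hpure : Matrix.diagonal ![(1 : ℂ), 0] = classicalState (bit 1) := by
    simp [classicalState_bit]
  have hhalf : Matrix.diagonal ![(1 / 2 : ℂ), 1 / 2] = classicalState (bit (1 / 2)) := by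
    rw [classicalState_bit]; norm_num
  have hε : Matrix.diagonal ![1 - (ε : ℂ), ε] = classicalState (bit (1 - ε)) := by
    simp [classicalState_bit]
  rw [hpure, hhalf] at hnorm
  rw [hpure, hε]
  exact ENNReal.apply_eq_ofReal_neg_logb_of_map_mul
    (f := fun p => D (Fin 2) (classicalState (bit 1)) (classicalState (bit p)))
    (fun p q hp0 hp1 hq0 hq1 => relEntropy_bit_mul D hdpi hadd hp0.le hp1 hq0.le hq1) hnorm
    (by linarith) (by linarith)
end

section
/- Let 𝐃 be a quantum divergence on pairs of (normalized) density matrices, and define its maximal extension to subnormalized states by 𝐃̄(ρ̃∥σ̃) = inf{𝐃(ρ∥σ) : ρ, σ density matrices on some system R, ℰ trace-non-increasing CP map with ℰ(ρ)=ρ̃, ℰ(σ)=σ̃}. Then 𝐃̄(ρ̃∥σ̃) = 𝐃(ρ̃ ⊕ (1−Tr ρ̃) ∥ σ̃ ⊕ (1−Tr σ̃)), where ρ̃ ⊕ c denotes the block-diagonal density matrix obtained by appending the scalar c. -/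
open scoped ENNReal Kronecker ComplexOrder Matrix
open Classical

/-- A subnormalized state: positive semidefinite with trace at most one. -/
def IsSubnormalized {n : Type} [Fintype n] (ρ : Matrix n n ℂ) : Prop :=
  ρ.PosSemidef ∧ ρ.trace.re ≤ 1

/-- A trace-non-increasing completely positive (linear) map. -/
def IsTNICP {a b : Type} [Fintype a] [Fintype b] (Φ : Matrix a a ℂ → Matrix b b ℂ) : Prop :=
  (∀ (c : ℂ) (A B : Matrix a a ℂ), Φ (c • A + B) = c • Φ A + Φ B) ∧
    IsCP Φ ∧ ∀ A : Matrix a a ℂ, A.PosSemidef → (Φ A).trace.re ≤ A.trace.re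

/-- Append a `1 × 1` block with entry `c` to a matrix (direct sum `ρ ⊕ c`). -/
def appendBlock {n : Type} (ρ : Matrix n n ℂ) (c : ℂ) : Matrix (n ⊕ Unit) (n ⊕ Unit) ℂ :=
  Matrix.fromBlocks ρ 0 0 (Matrix.of fun _ _ => c)

/-- The maximal extension of a quantum divergence `D` (defined on normalized states) to
subnormalized states: the infimum of `D(ρ‖σ)` over all density matrices `ρ, σ` on some
system and trace-non-increasing CP maps `ℰ` with `ℰ(ρ) = ρ̃`, `ℰ(σ) = σ̃`. -/
noncomputable def maxExtSub
    (D : ∀ (m : Type) [Fintype m] [DecidableEq m],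
      Matrix m m ℂ → Matrix m m ℂ → ℝ≥0∞)
    {n : Type} [Fintype n] (ρt σt : Matrix n n ℂ) : ℝ≥0∞ :=
  sInf { v | ∃ (r : ℕ) (ρ σ : Matrix (Fin r) (Fin r) ℂ)
      (Φ : Matrix (Fin r) (Fin r) ℂ → Matrix n n ℂ),
    IsDensity ρ ∧ IsDensity σ ∧ IsTNICP Φ ∧ Φ ρ = ρt ∧ Φ σ = σt ∧ v = D (Fin r) ρ σ }

/-!
If `(ρ, σ, ℰ)` is feasible for the infimum, then `X ↦ ℰ X ⊕ (Tr X - Tr ℰ X)` is a channel: its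
first block is completely positive, and its second block is a positive linear functional, hence
completely positive. It maps `ρ, σ` to `ρ̃ ⊕ (1 - Tr ρ̃), σ̃ ⊕ (1 - Tr σ̃)`, so data processing
bounds the right-hand side by the infimum. Conversely these two extended states are feasible
themselves (after reindexing by `Fin r`, which data processing allows), with `ℰ` the compression
onto the first block.
-/

open Matrix

lemma Complex.le_of_re_le {z w : ℂ} (hz : 0 ≤ z) (hw : 0 ≤ w) (h : z.re ≤ w.re) : z ≤ w :=
  Complex.le_def.mpr ⟨h, by rw [← (Complex.nonneg_iff.mp hz).2, ← (Complex.nonneg_iff.mp hw).2]⟩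

namespace Matrix

lemma PosSemidef.of_dotProduct_mulVec_nonneg_complex {m : Type} [Fintype m] [DecidableEq m]
    {M : Matrix m m ℂ} (h : ∀ x : m → ℂ, 0 ≤ star x ⬝ᵥ (M *ᵥ x)) : M.PosSemidef := by
  rw [← isPositive_toEuclideanLin_iff, LinearMap.isPositive_iff_complex]
  intro x
  obtain ⟨hre, him⟩ := Complex.nonneg_iff.mp (h x)
  rw [EuclideanSpace.inner_eq_star_dotProduct, dotProduct_star, dotProduct_comm]
  simp [Complex.ext_iff, hre, ← him]

lemma PosSemidef.fromBlocks_zero {p q : Type} [Fintype p] [Fintype q]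
    {A : Matrix p p ℂ} {B : Matrix q q ℂ} (hA : A.PosSemidef) (hB : B.PosSemidef) :
    (fromBlocks A 0 0 B).PosSemidef := by
  refine .of_dotProduct_mulVec_nonneg (hA.1.fromBlocks (by simp) hB.1) fun x => ?_
  obtain ⟨u, v, rfl⟩ : ∃ u v, x = Sum.elim u v := ⟨_, _, (Sum.elim_comp_inl_inr x).symm⟩
  simp only [fromBlocks_mulVec, zero_mulVec, add_zero, zero_add, Sum.elim_comp_inl,
    Sum.elim_comp_inr, Function.star_sumElim, sumElim_dotProduct_sumElim]
  exact add_nonneg (hA.dotProduct_mulVec_nonneg _) (hB.dotProduct_mulVec_nonneg _)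

end Matrix

lemma trace_appendBlock {n : Type} [Fintype n] (X : Matrix n n ℂ) (c : ℂ) :
    (appendBlock X c).trace = X.trace + c := by
  simp [appendBlock, trace, Fintype.sum_sum_type]

lemma submatrix_inl_appendBlock {n : Type} (X : Matrix n n ℂ) (c : ℂ) :
    (appendBlock X c).submatrix Sum.inl Sum.inl = X :=
  rfl

lemma posSemidef_appendBlock {n : Type} [Fintype n] {X : Matrix n n ℂ} {c : ℂ}
    (hX : X.PosSemidef) (hc : 0 ≤ c) : (appendBlock X c).PosSemidef := by
  refine hX.fromBlocks_zero (.of_dotProduct_mulVec_nonneg_complex fun x => ?_)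
  simpa [dotProduct, mulVec, mul_comm c, ← mul_assoc] using
    mul_nonneg (star_mul_self_nonneg (x ())) hc

lemma isDensity_appendBlock {n : Type} [Fintype n] {ρ : Matrix n n ℂ}
    (hρ : IsSubnormalized ρ) : IsDensity (appendBlock ρ (1 - ρ.trace)) := by
  refine ⟨posSemidef_appendBlock hρ.1 ?_, by rw [trace_appendBlock]; ring⟩
  exact sub_nonneg.mpr (Complex.le_of_re_le hρ.1.trace_nonneg zero_le_one (by simpa using hρ.2))

lemma isLinearMap_of_map_smul_add {R M N : Type*} [Semiring R] [AddCommMonoid M] [AddCommGroup N]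
    [Module R M] [Module R N] {f : M → N} (h : ∀ (c : R) (x y : M), f (c • x + y) = c • f x + f y) :
    IsLinearMap R f := by
  have map_zero : f 0 = 0 := by simpa using h 1 0 0
  exact ⟨fun x y => by simpa using h 1 x y, fun c x => by simpa [map_zero] using h c x 0⟩

section CompletelyPositive

lemma cpExt_comp {a b c : Type} (Ψ : Matrix b b ℂ → Matrix c c ℂ)
    (Φ : Matrix a a ℂ → Matrix b b ℂ) (m : Type) (M : Matrix (m × a) (m × a) ℂ) :
    cpExt (Ψ ∘ Φ) m M = cpExt Ψ m (cpExt Φ m M) :=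
  rfl

variable {a b c : Type} [Fintype a] [Fintype b] [Fintype c]

lemma IsCP.comp {Ψ : Matrix b b ℂ → Matrix c c ℂ} {Φ : Matrix a a ℂ → Matrix b b ℂ}
    (hΨ : IsCP Ψ) (hΦ : IsCP Φ) : IsCP (Ψ ∘ Φ) :=
  fun m _ M hM => by rw [cpExt_comp]; exact hΨ m _ (hΦ m M hM)

lemma IsCP.posSemidef {Φ : Matrix a a ℂ → Matrix b b ℂ} (hΦ : IsCP Φ) {X : Matrix a a ℂ}
    (hX : X.PosSemidef) : (Φ X).PosSemidef :=
  (hΦ Unit (X.submatrix Prod.snd Prod.snd) (hX.submatrix _)).submatrix fun i => ((), i)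

lemma isCP_submatrix (f : b → a) : IsCP fun X : Matrix a a ℂ => X.submatrix f f :=
  fun _ _ _ hM => hM.submatrix (Prod.map id f)

lemma IsCPTP.isTNICP {Φ : Matrix a a ℂ → Matrix b b ℂ} (hΦ : IsCPTP Φ) : IsTNICP Φ :=
  ⟨hΦ.1, hΦ.2.1, fun X _ => (congrArg Complex.re (hΦ.2.2 X)).le⟩

lemma IsCPTP.isDensity {Φ : Matrix a a ℂ → Matrix b b ℂ} (hΦ : IsCPTP Φ) {ρ : Matrix a a ℂ}
    (hρ : IsDensity ρ) : IsDensity (Φ ρ) :=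
  ⟨hΦ.2.1.posSemidef hρ.1, (hΦ.2.2 ρ).trans hρ.2⟩

lemma IsTNICP.trace_le {Φ : Matrix a a ℂ → Matrix b b ℂ} (hΦ : IsTNICP Φ) {X : Matrix a a ℂ}
    (hX : X.PosSemidef) : (Φ X).trace ≤ X.trace :=
  Complex.le_of_re_le (hΦ.2.1.posSemidef hX).trace_nonneg hX.trace_nonneg (hΦ.2.2 X hX)

lemma IsTNICP.comp {Ψ : Matrix b b ℂ → Matrix c c ℂ} {Φ : Matrix a a ℂ → Matrix b b ℂ}
    (hΨ : IsTNICP Ψ) (hΦ : IsTNICP Φ) : IsTNICP (Ψ ∘ Φ) :=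
  ⟨fun z X Y => by simp only [Function.comp_apply, hΦ.1, hΨ.1], hΨ.2.1.comp hΦ.2.1,
    fun X hX => (hΨ.2.2 _ (hΦ.2.1.posSemidef hX)).trans (hΦ.2.2 X hX)⟩

lemma isCPTP_submatrix_equiv (e : b ≃ a) : IsCPTP fun X : Matrix a a ℂ => X.submatrix e e :=
  ⟨fun z X Y => by ext; simp, isCP_submatrix e,
    fun X => Fintype.sum_equiv e _ _ fun _ => rfl⟩

lemma isTNICP_submatrix {f : b → a} (hf : Function.Injective f) :
    IsTNICP fun X : Matrix a a ℂ => X.submatrix f f := by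
  refine ⟨fun z X Y => by ext; simp, isCP_submatrix f, fun X hX => ?_⟩
  simp only [trace, diag, submatrix_apply, Complex.re_sum]
  calc ∑ i, (X (f i) (f i)).re = ∑ i ∈ Finset.univ.map ⟨f, hf⟩, (X i i).re :=
        by rw [Finset.sum_map]; rfl
    _ ≤ ∑ i, (X i i).re :=
        Finset.sum_le_univ_sum_of_nonneg fun _ => (Complex.nonneg_iff.mp hX.diag_nonneg).1

end CompletelyPositive

/-- Positive linear functionals are completely positive. -/
lemma posSemidef_of_map_blocks {a m : Type} [Fintype a] [Fintype m] [DecidableEq a]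
    [DecidableEq m]
    (f : Matrix a a ℂ →ₗ[ℂ] ℂ) (hf : ∀ N : Matrix a a ℂ, N.PosSemidef → 0 ≤ f N)
    {M : Matrix (m × a) (m × a) ℂ} (hM : M.PosSemidef) :
    (of fun p q => f ((comp m m a a ℂ).symm M p q)).PosSemidef := by
  refine .of_dotProduct_mulVec_nonneg_complex fun z => ?_
  let V : Matrix (m × a) a ℂ := of fun pk l => z pk.1 * (1 : Matrix a a ℂ) pk.2 l
  have hV : Vᴴ * M * V = ∑ p, ∑ q, (star (z p) * z q) • (comp m m a a ℂ).symm M p q := by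
    ext k l
    simp only [V, one_apply, mul_ite, mul_one, mul_zero, mul_apply, conjTranspose_apply, of_apply,
      apply_ite star, star_zero, ite_mul, zero_mul, Fintype.sum_prod_type, Finset.sum_ite_eq',
      Finset.mem_univ, if_true, Finset.sum_mul, Matrix.sum_apply, Matrix.smul_apply,
      comp_symm_apply, smul_eq_mul]
    rw [Finset.sum_comm]
    exact Fintype.sum_congr _ _ fun p => Fintype.sum_congr _ _ fun q => by ring
  have hz : star z ⬝ᵥ (of fun p q => f ((comp m m a a ℂ).symm M p q)) *ᵥ z =
      f (Vᴴ * M * V) := by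
    simp only [hV, dotProduct, mulVec, Finset.mul_sum, map_sum, map_smul, of_apply, smul_eq_mul,
      Pi.star_apply]
    exact Fintype.sum_congr _ _ fun p => Fintype.sum_congr _ _ fun q => by ring
  exact hz ▸ hf _ (hM.conjTranspose_mul_mul_same V)

section TraceCompletion

variable {a n : Type} [Fintype a] [Fintype n]

def traceCompletion (Φ : Matrix a a ℂ → Matrix n n ℂ) (X : Matrix a a ℂ) :
    Matrix (n ⊕ Unit) (n ⊕ Unit) ℂ :=
  appendBlock (Φ X) (X.trace - (Φ X).trace)

lemma cpExt_traceCompletion (Φ : Matrix a a ℂ → Matrix n n ℂ) (m : Type)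
    (M : Matrix (m × a) (m × a) ℂ) :
    cpExt (traceCompletion Φ) m M =
      (fromBlocks (cpExt Φ m M) 0 0 (of fun p q =>
          ((comp m m a a ℂ).symm M p q).trace - (Φ ((comp m m a a ℂ).symm M p q)).trace)).submatrix
        (fun pi => Sum.map (fun i => (pi.1, i)) (fun _ => pi.1) pi.2)
        (fun pi => Sum.map (fun i => (pi.1, i)) (fun _ => pi.1) pi.2) := by
  ext ⟨p, i | _⟩ ⟨q, j | _⟩ <;> rfl

lemma IsTNICP.isCPTP_traceCompletion {Φ : Matrix a a ℂ → Matrix n n ℂ}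
    (hΦ : IsTNICP Φ) : IsCPTP (traceCompletion Φ) := by
  refine ⟨fun c X Y => ?_, fun m _ M hM => ?_,
    fun X => by simp [traceCompletion, trace_appendBlock]⟩
  · ext (i | _) (j | _) <;> simp [traceCompletion, appendBlock, hΦ.1, trace_add, mul_sub,
      sub_add_sub_comm]
  · let lostTrace : Matrix a a ℂ →ₗ[ℂ] ℂ :=
      traceLinearMap a ℂ ℂ - traceLinearMap n ℂ ℂ ∘ₗ (isLinearMap_of_map_smul_add hΦ.1).mk' Φ
    have hlost : ∀ N : Matrix a a ℂ, N.PosSemidef → 0 ≤ lostTrace N :=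
      fun N hN => sub_nonneg.mpr (hΦ.trace_le hN)
    rw [cpExt_traceCompletion]
    exact ((hΦ.2.1 m M hM).fromBlocks_zero
      (posSemidef_of_map_blocks lostTrace hlost hM)).submatrix _

end TraceCompletion

def IsQuantumDivergence
    (D : ∀ (m : Type) [Fintype m] [DecidableEq m], Matrix m m ℂ → Matrix m m ℂ → ℝ≥0∞) : Prop :=
  ∀ (a b : Type) [Fintype a] [DecidableEq a] [Fintype b] [DecidableEq b]
    (Φ : Matrix a a ℂ → Matrix b b ℂ), IsCPTP Φ →
    ∀ ρ σ : Matrix a a ℂ, IsDensity ρ → IsDensity σ → D b (Φ ρ) (Φ σ) ≤ D a ρ σ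

section MaximalExtension

variable {D : ∀ (m : Type) [Fintype m] [DecidableEq m], Matrix m m ℂ → Matrix m m ℂ → ℝ≥0∞}

lemma maxExtSub_le_of_isTNICP (hD : IsQuantumDivergence D) {ι n : Type} [Fintype ι]
    [DecidableEq ι] [Fintype n] {ρ σ : Matrix ι ι ℂ} (hρ : IsDensity ρ) (hσ : IsDensity σ)
    {Φ : Matrix ι ι ℂ → Matrix n n ℂ} (hΦ : IsTNICP Φ) :
    maxExtSub D (Φ ρ) (Φ σ) ≤ D ι ρ σ := by
  let e : Fin (Fintype.card ι) ≃ ι := (Fintype.equivFin ι).symm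
  have hreindex := isCPTP_submatrix_equiv (a := ι) e
  refine sInf_le_of_le ⟨_, ρ.submatrix e e, σ.submatrix e e,
    Φ ∘ fun X => X.submatrix e.symm e.symm, hreindex.isDensity hρ, hreindex.isDensity hσ,
    hΦ.comp (isCPTP_submatrix_equiv e.symm).isTNICP, by simp, by simp, rfl⟩ ?_
  exact hD _ _ _ hreindex ρ σ hρ hσ

lemma le_maxExtSub (hD : IsQuantumDivergence D) {n : Type} [Fintype n] [DecidableEq n]
    (ρt σt : Matrix n n ℂ) :
    D (n ⊕ Unit) (appendBlock ρt (1 - ρt.trace)) (appendBlock σt (1 - σt.trace)) ≤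
      maxExtSub D ρt σt := by
  refine le_sInf ?_
  rintro _ ⟨r, ρ, σ, Φ, hρ, hσ, hΦ, rfl, rfl, rfl⟩
  simpa [traceCompletion, hρ.2, hσ.2] using
    hD _ _ _ hΦ.isCPTP_traceCompletion ρ σ hρ hσ

end MaximalExtension

/-- **Closed formula for the maximal extension to subnormalized states.** For any
quantum divergence `D` and subnormalized states `ρ̃, σ̃`:
`D̄(ρ̃‖σ̃) = D(ρ̃ ⊕ (1 - Tr ρ̃) ‖ σ̃ ⊕ (1 - Tr σ̃))`. -/
theorem stmt13
    (D : ∀ (m : Type) [Fintype m] [DecidableEq m],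
      Matrix m m ℂ → Matrix m m ℂ → ℝ≥0∞)
    -- data-processing inequality under quantum channels
    (hdpi : ∀ (a b : Type) [Fintype a] [DecidableEq a] [Fintype b] [DecidableEq b]
      (Φ : Matrix a a ℂ → Matrix b b ℂ), IsCPTP Φ →
      ∀ ρ σ : Matrix a a ℂ, IsDensity ρ → IsDensity σ → D b (Φ ρ) (Φ σ) ≤ D a ρ σ)
    (n : Type) [Fintype n] [DecidableEq n] (ρt σt : Matrix n n ℂ)
    (hρ : IsSubnormalized ρt) (hσ : IsSubnormalized σt) :
    maxExtSub D ρt σt =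
      D (n ⊕ Unit) (appendBlock ρt (1 - ρt.trace)) (appendBlock σt (1 - σt.trace)) := by
  refine le_antisymm ?_ (le_maxExtSub hdpi ρt σt)
  have hrestrict := isTNICP_submatrix (a := n ⊕ Unit) Sum.inl_injective
  simpa only [submatrix_inl_appendBlock] using maxExtSub_le_of_isTNICP hdpi
    (isDensity_appendBlock hρ) (isDensity_appendBlock hσ) hrestrict
end

section
/- The maximal extension of the trace distance D(ρ,σ) = ½‖ρ−σ‖₁ from density matrices to subnormalized states (via trace-non-increasing CP maps) equals the generalized trace distance: D̄(ρ̃,σ̃) = ½‖ρ̃ − σ̃‖₁ + ½|Tr[ρ̃ − σ̃]| for all positive semidefinite ρ̃, σ̃ with trace ≤ 1. Equivalently: ½‖(ρ̃⊕(1−Tr ρ̃)) − (σ̃⊕(1−Tr σ̃))‖₁ = ½‖ρ̃−σ̃‖₁ + ½|Tr[ρ̃−σ̃]|. -/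
open scoped ENNReal Kronecker ComplexOrder Matrix
open Classical

/-- The trace norm `‖A‖₁ = Tr √(Aᴴ A)` (sum of singular values). -/
noncomputable def traceNorm {n : Type} [Fintype n] [DecidableEq n] (A : Matrix n n ℂ) : ℝ :=
  ((Matrix.posSemidef_conjTranspose_mul_self A).1.eigenvectorUnitary.1 *
    Matrix.diagonal (((↑) : ℝ → ℂ) ∘ (√·) ∘ (Matrix.posSemidef_conjTranspose_mul_self A).1.eigenvalues) *
    (star (Matrix.posSemidef_conjTranspose_mul_self A).1.eigenvectorUnitary : Matrix n n ℂ)).trace.re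
/-! The difference of the two extended states is again block diagonal, `(ρ̃ - σ̃) ⊕ Tr[σ̃ - ρ̃]`,
and the trace norm is additive over block-diagonal sums because the square root of
`diag(Aᴴ A, Dᴴ D)` is `diag(√(Aᴴ A), √(Dᴴ D))`. The `1 × 1` block contributes `|Tr[σ̃ - ρ̃]|`,
which is `|Re Tr[ρ̃ - σ̃]|` because the trace of a Hermitian matrix is real. -/

namespace Matrix

theorem trace_fromBlocks {m n α : Type*} [Fintype m] [Fintype n] [AddCommMonoid α]
    (A : Matrix m m α) (B : Matrix m n α) (C : Matrix n m α) (D : Matrix n n α) :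
    (fromBlocks A B C D).trace = A.trace + D.trace := by
  simp [trace, Fintype.sum_sum_type]

theorem PosSemidef.fromBlocks_zero_s14 {m n R : Type*} [Fintype m] [Fintype n]
    [Ring R] [PartialOrder R] [StarRing R] [AddLeftMono R]
    {A : Matrix m m R} {D : Matrix n n R} (hA : A.PosSemidef) (hD : D.PosSemidef) :
    (fromBlocks A 0 0 D).PosSemidef := by
  refine .of_dotProduct_mulVec_nonneg ?_ fun x => ?_
  · simp [isHermitian_fromBlocks_iff, hA.1, hD.1]
  · have hsplit : star x ⬝ᵥ (fromBlocks A 0 0 D *ᵥ x) =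
        star (x ∘ Sum.inl) ⬝ᵥ (A *ᵥ (x ∘ Sum.inl)) +
          star (x ∘ Sum.inr) ⬝ᵥ (D *ᵥ (x ∘ Sum.inr)) := by
      simp [fromBlocks_mulVec, dotProduct, Fintype.sum_sum_type]
    rw [hsplit]
    exact add_nonneg (hA.dotProduct_mulVec_nonneg _) (hD.dotProduct_mulVec_nonneg _)

theorem IsHermitian.ofReal_re_trace {n : Type*} [Fintype n] {A : Matrix n n ℂ}
    (hA : A.IsHermitian) : (A.trace.re : ℂ) = A.trace :=
  Complex.conj_eq_iff_re.mp <| by rw [← Complex.star_def, ← trace_conjTranspose, hA.eq]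

theorem IsHermitian.norm_trace {n : Type*} [Fintype n] {A : Matrix n n ℂ}
    (hA : A.IsHermitian) : ‖A.trace‖ = |A.trace.re| := by
  rw [← hA.ofReal_re_trace, Complex.norm_real, Real.norm_eq_abs, Complex.ofReal_re]

end Matrix

open Matrix

theorem appendBlock_sub {n : Type} (ρ σ : Matrix n n ℂ) (a b : ℂ) :
    appendBlock ρ a - appendBlock σ b = appendBlock (ρ - σ) (a - b) := by
  ext (i | i) (j | j) <;> simp [appendBlock]

section TraceNorm

variable {m n : Type} [Fintype m] [Fintype n] [DecidableEq m] [DecidableEq n]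

open scoped MatrixOrder

theorem traceNorm_eq_re_trace_sqrt (A : Matrix n n ℂ) :
    traceNorm A = (CFC.sqrt (Aᴴ * A)).trace.re := by
  have hA := posSemidef_conjTranspose_mul_self A
  rw [traceNorm, CFC.sqrt_eq_cfc, cfc_nnreal_eq_real _ _ hA.nonneg, hA.1.cfc_eq]
  simp only [IsHermitian.cfc, Unitary.conjStarAlgAut_apply, Real.coe_sqrt, Real.coe_toNNReal']
  congr 5
  funext i
  simp [max_eq_left (hA.eigenvalues_nonneg i)]

theorem traceNorm_fromBlocks_zero (A : Matrix m m ℂ) (D : Matrix n n ℂ) :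
    traceNorm (fromBlocks A 0 0 D) = traceNorm A + traceNorm D := by
  have hsqrt : CFC.sqrt ((fromBlocks A 0 0 D)ᴴ * fromBlocks A 0 0 D) =
      fromBlocks (CFC.sqrt (Aᴴ * A)) 0 0 (CFC.sqrt (Dᴴ * D)) := by
    refine CFC.sqrt_unique ?_ (PosSemidef.fromBlocks_zero_s14 ?_ ?_).nonneg
    · simp [fromBlocks_conjTranspose, fromBlocks_multiply,
        CFC.sqrt_mul_sqrt_self _ (posSemidef_conjTranspose_mul_self A).nonneg,
        CFC.sqrt_mul_sqrt_self _ (posSemidef_conjTranspose_mul_self D).nonneg]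
    · exact nonneg_iff_posSemidef.mp (CFC.sqrt_nonneg _)
    · exact nonneg_iff_posSemidef.mp (CFC.sqrt_nonneg _)
  rw [traceNorm_eq_re_trace_sqrt, traceNorm_eq_re_trace_sqrt, traceNorm_eq_re_trace_sqrt,
    hsqrt, trace_fromBlocks, Complex.add_re]

theorem traceNorm_diagonal (d : n → ℂ) : traceNorm (diagonal d) = ∑ i, ‖d i‖ := by
  have hsqrt : CFC.sqrt ((diagonal d)ᴴ * diagonal d) = diagonal fun i => (‖d i‖ : ℂ) := by
    refine CFC.sqrt_unique ?_ ?_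
    · rw [diagonal_conjTranspose, diagonal_mul_diagonal, diagonal_mul_diagonal]
      simp [← sq, Complex.conj_mul']
    · exact (PosSemidef.diagonal fun i => Complex.zero_le_real.mpr (norm_nonneg (d i))).nonneg
  rw [traceNorm_eq_re_trace_sqrt, hsqrt]
  simp

theorem traceNorm_appendBlock (A : Matrix n n ℂ) (c : ℂ) :
    traceNorm (appendBlock A c) = traceNorm A + ‖c‖ := by
  have hc : (of fun _ _ => c : Matrix Unit Unit ℂ) = diagonal fun _ => c := by
    ext; simp
  rw [appendBlock, hc, traceNorm_fromBlocks_zero, traceNorm_diagonal, Fintype.sum_unique]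

end TraceNorm

/-- **Generalized trace distance.** The maximal extension of the trace distance to
subnormalized states, `D̄(ρ̃,σ̃) = ½‖(ρ̃ ⊕ (1-Tr ρ̃)) - (σ̃ ⊕ (1-Tr σ̃))‖₁`, equals the
generalized trace distance `½‖ρ̃ - σ̃‖₁ + ½|Tr[ρ̃ - σ̃]|`. -/
theorem stmt14 (n : Type) [Fintype n] [DecidableEq n] (ρt σt : Matrix n n ℂ)
    (hρ : IsSubnormalized ρt) (hσ : IsSubnormalized σt) :
    (1/2) * traceNorm (appendBlock ρt (1 - ρt.trace) - appendBlock σt (1 - σt.trace)) =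
      (1/2) * traceNorm (ρt - σt) + (1/2) * |(ρt - σt).trace.re| := by
  have htrace : (1 - ρt.trace) - (1 - σt.trace) = -(ρt - σt).trace := by
    rw [trace_sub]; ring
  rw [appendBlock_sub, traceNorm_appendBlock, htrace, norm_neg,
    (hρ.1.isHermitian.sub hσ.1.isHermitian).norm_trace]
  ring
end

section
/- Let 𝔉 be a purifiable quantum resource theory and M₁ a resource measure on pure states (monotone under free channels mapping pure states to pure states). Then the maximal extension of M₁ to mixed states satisfies M̄₁(ρ^A) = inf{M₁(ψ^{RA}) : ψ^{RA} pure with Tr_R[ψ^{RA}] = ρ^A}, i.e. it is the infimum of M₁ over all purifications of ρ. -/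
open scoped ENNReal Kronecker ComplexOrder Matrix
open Classical

/-- A pure state: a rank-one projector `|v⟩⟨v|` with `⟨v|v⟩ = 1`. -/
def IsPure {n : Type} [Fintype n] (ρ : Matrix n n ℂ) : Prop :=
  ∃ v : n → ℂ, star v ⬝ᵥ v = 1 ∧ ρ = Matrix.vecMulVec v (star v)

/-- Partial trace over the first tensor factor: `Tr_R : 𝔏(R ⊗ A) → 𝔏(A)`. -/
noncomputable def ptraceFst {R A : Type} [Fintype R] (M : Matrix (R × A) (R × A) ℂ) : Matrix A A ℂ :=
  Matrix.of fun i j => ∑ r, M (r, i) (r, j)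

lemma pure_conj_aux {a b : Type} [Fintype a] [DecidableEq a] [Fintype b]
    (W : Matrix b a ℂ) (hW : Wᴴ * W = 1) {ψ : Matrix a a ℂ} (h : IsPure ψ) :
    IsPure (W * ψ * Wᴴ) := by
  obtain ⟨v, hv, rfl⟩ := h
  refine ⟨W.mulVec v, ?_, ?_⟩
  · rw [Matrix.star_mulVec, Matrix.dotProduct_mulVec, Matrix.vecMul_vecMul, hW,
      Matrix.vecMul_one, hv]
  · ext i j
    simp only [Matrix.mul_apply, Matrix.vecMulVec_apply, Matrix.mulVec,
      dotProduct, Matrix.conjTranspose_apply, Pi.star_apply,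
      Finset.sum_mul, Finset.mul_sum, star_sum, star_mul']
    apply Finset.sum_congr rfl; intro l _
    apply Finset.sum_congr rfl; intro k _
    ring

/-- **The maximal extension in a purifiable QRT is the infimum over purifications.**
If every free channel admits a free isometric dilation and partial traces are free,
then for a resource measure `M₁` on pure states,
`M̄₁(ρ) = inf { M₁(ψ^{RA}) : ψ pure, Tr_R ψ = ρ }`. -/
theorem stmt17
    -- the sets of free channels of a quantum resource theory
    (F : ∀ (A B : Type) [Fintype A] [DecidableEq A] [Fintype B] [DecidableEq B],
      Set (Matrix A A ℂ → Matrix B B ℂ))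
    -- free maps are quantum channels
    (hcptp : ∀ (A B : Type) [Fintype A] [DecidableEq A] [Fintype B] [DecidableEq B],
      ∀ E ∈ F A B, IsCPTP E)
    -- identity channels are free
    (hid : ∀ (A : Type) [Fintype A] [DecidableEq A], id ∈ F A A)
    -- free maps are closed under composition
    (hcomp : ∀ (A B C : Type) [Fintype A] [DecidableEq A] [Fintype B] [DecidableEq B]
      [Fintype C] [DecidableEq C], ∀ E₁ ∈ F A B, ∀ E₂ ∈ F B C, E₂ ∘ E₁ ∈ F A C)
    -- partial traces are free
    (hptrace : ∀ (R A : Type) [Fintype R] [DecidableEq R] [Fintype A] [DecidableEq A],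
      ptraceFst ∈ F (R × A) A)
    -- the QRT is purifiable: every free channel has a free isometric dilation
    (hpurif : ∀ (A B : Type) [Fintype A] [DecidableEq A] [Fintype B] [DecidableEq B],
      ∀ E ∈ F A B, ∃ (E' : Type) (iE : Fintype E') (dE : DecidableEq E')
        (W : Matrix (E' × B) A ℂ), Wᴴ * W = 1 ∧
        (fun ρ => W * ρ * Wᴴ) ∈ F A (E' × B) ∧
        ∀ ρ : Matrix A A ℂ, E ρ = ptraceFst (W * ρ * Wᴴ))
    -- a resource measure on pure states
    (M1 : ∀ (A : Type) [Fintype A] [DecidableEq A], Matrix A A ℂ → ℝ≥0∞)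
    (hmono : ∀ (A B : Type) [Fintype A] [DecidableEq A] [Fintype B] [DecidableEq B],
      ∀ ψ : Matrix A A ℂ, ∀ E ∈ F A B, IsPure ψ → IsPure (E ψ) →
        M1 B (E ψ) ≤ M1 A ψ)
    (A : Type) [Fintype A] [DecidableEq A] (ρ : Matrix A A ℂ) (hρ : IsDensity ρ) :
    sInf { v | ∃ (B : Type) (iB : Fintype B) (dB : DecidableEq B)
        (ψ : Matrix B B ℂ) (E : Matrix B B ℂ → Matrix A A ℂ),
        @IsPure B iB ψ ∧ E ∈ F B A ∧ E ψ = ρ ∧ v = @M1 B iB dB ψ } =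
    sInf { v | ∃ (R : Type) (iR : Fintype R) (dR : DecidableEq R)
        (ψ : Matrix (R × A) (R × A) ℂ),
        @IsPure (R × A) (@instFintypeProd R A iR _) ψ ∧
        @ptraceFst R A iR ψ = ρ ∧
        v = @M1 (R × A) (@instFintypeProd R A iR _) (@instDecidableEqProd R A dR _) ψ } := by
  apply le_antisymm
  · -- every purification is a (pure state, free channel) decomposition
    apply sInf_le_sInf
    rintro v ⟨R, iR, dR, ψ, hpure, hpt, hv⟩
    exact ⟨R × A, instFintypeProd R A, instDecidableEqProd, ψ, ptraceFst,
      hpure, hptrace R A, hpt, hv⟩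
  · -- dilate each free decomposition to a purification
    apply le_sInf
    rintro v ⟨B, iB, dB, ψ, E, hψ, hE, hEψ, hv⟩
    obtain ⟨E', iE, dE, W, hW, hWfree, hdil⟩ := hpurif B A E hE
    have hpureW : IsPure (W * ψ * Wᴴ) := pure_conj_aux W hW hψ
    have hpt : ptraceFst (W * ψ * Wᴴ) = ρ := by rw [← hdil ψ, hEψ]
    have hmem : M1 (E' × A) (W * ψ * Wᴴ) ∈
        { v | ∃ (R : Type) (iR : Fintype R) (dR : DecidableEq R)
          (ψ : Matrix (R × A) (R × A) ℂ),
          @IsPure (R × A) (@instFintypeProd R A iR _) ψ ∧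
          @ptraceFst R A iR ψ = ρ ∧
          v = @M1 (R × A) (@instFintypeProd R A iR _) (@instDecidableEqProd R A dR _) ψ } :=
      ⟨E', iE, dE, W * ψ * Wᴴ, hpureW, hpt, rfl⟩
    have hle : M1 (E' × A) (W * ψ * Wᴴ) ≤ M1 B ψ :=
      hmono B (E' × A) ψ (fun ρ => W * ρ * Wᴴ) hWfree hψ hpureW
    calc sInf _ ≤ M1 (E' × A) (W * ψ * Wᴴ) := sInf_le hmem
      _ ≤ M1 B ψ := hle
      _ = v := hv.symm
end
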